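/- For every δ > 0 there exists a finite set S ⊆ ([−M,M]^p)^k with cardinality at most (max{⌊8 M² τ H_p k p / δ⌋, 1})^{k p} such that for every Θ ∈ ([−M,M]^p)^k there is Θ′ ∈ S with sup over x ∈ [−M,M]^p of |f_Θ(x) − f_{Θ′}(x)| at most δ. In other words, the δ-covering number, under the supremum norm on [−M,M]^p, of the function class F = {f_Θ restricted to [−M,M]^p : Θ ∈ ([−M,M]^p)^k} is at most (max{⌊8 M² τ H_p k p / δ⌋, 1})^{k p}. -/

import Mathlib

open MeasureTheory ProbabilityTheory Real Filter
open scoped ENNReal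

/-- Bregman divergence generated by a differentiable function `φ`. -/
noncomputable def dphi {p : ℕ} (φ : EuclideanSpace ℝ (Fin p) → ℝ)
    (x y : EuclideanSpace ℝ (Fin p)) : ℝ :=
  φ x - φ y - inner ℝ (gradient φ y) (x - y)

/-- The cube `[-M, M]^p` in `ℝ^p`. -/
def cube (p : ℕ) (M : ℝ) : Set (EuclideanSpace ℝ (Fin p)) := {x | ∀ i, |x i| ≤ M}

/-- The clustering objective `f_Θ(x) = Ψ(d_φ(x,θ₁),…,d_φ(x,θ_k))`. -/
noncomputable def fTheta {p k : ℕ} (φ : EuclideanSpace ℝ (Fin p) → ℝ)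
    (Ψ : (Fin k → ℝ) → ℝ) (Θ : Fin k → EuclideanSpace ℝ (Fin p))
    (x : EuclideanSpace ℝ (Fin p)) : ℝ :=
  Ψ (fun j => dphi φ x (Θ j))

/-!
By the gradient inequality for the convex `φ` and the Lipschitz bound on `∇φ`,
`|d_φ(x,θ) - d_φ(x,θ')| ≤ H ‖θ - θ'‖ (‖θ - θ'‖ + ‖x - θ‖)`, which on the cube is at most
`3 H p ε M` when the coordinates of `θ` and `θ'` differ by at most `ε ≤ M`. As `Ψ` is
`τ`-Lipschitz for `ℓ¹`, `f_Θ` then moves by at most `3 τ k H p ε M`. Rounding every coordinate of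
every centre to the nearest midpoint of the partition of `[-M, M]` into `N` intervals gives
`ε = M / N`, and `N = max ⌊8 M² τ H k p / δ⌋ 1 ≥ 4 M² τ H k p / δ` brings the error below `δ`
with `N ^ (k p)` grid points.
-/

theorem ConvexOn.add_inner_le_of_hasGradientAt {E : Type*} [NormedAddCommGroup E]
    [InnerProductSpace ℝ E] [CompleteSpace E] {φ : E → ℝ} (hφ : ConvexOn ℝ Set.univ φ)
    {x g : E} (hg : HasGradientAt φ g x) (y : E) :
    φ x + inner ℝ g (y - x) ≤ φ y := by
  have hline : HasDerivAt (φ ∘ AffineMap.lineMap x y) (inner ℝ g (y - x)) (0 : ℝ) := by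
    have hg' : HasFDerivAt φ (InnerProductSpace.toDual ℝ E g) (AffineMap.lineMap x y (0 : ℝ)) := by
      simpa using hasGradientAt_iff_hasFDerivAt.mp hg
    simpa using hg'.comp_hasDerivAt (0 : ℝ) AffineMap.hasDerivAt_lineMap
  have hslope := ((hφ.comp_affineMap (AffineMap.lineMap x y)).le_slope_of_hasDerivAt
    (Set.mem_univ _) (Set.mem_univ _) one_pos hline)
  simp only [slope_def_field, Function.comp_apply, AffineMap.lineMap_apply_one,
    AffineMap.lineMap_apply_zero, sub_zero, div_one] at hslope
  linarith

theorem EuclideanSpace.norm_le_sqrt_card_mul {ι : Type*} [Fintype ι] {a : EuclideanSpace ℝ ι}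
    {c : ℝ} (hc : 0 ≤ c) (h : ∀ i, |a i| ≤ c) : ‖a‖ ≤ √(Fintype.card ι) * c := by
  rw [EuclideanSpace.norm_eq, ← Real.sqrt_sq hc, ← Real.sqrt_mul (Nat.cast_nonneg _)]
  refine Real.sqrt_le_sqrt ?_
  calc ∑ i, ‖a i‖ ^ 2 ≤ ∑ _i : ι, c ^ 2 :=
        Finset.sum_le_sum fun i _ => pow_le_pow_left₀ (norm_nonneg _) (h i) 2
    _ = Fintype.card ι * c ^ 2 := by simp

theorem half_le_max_floor_one (x : ℝ) : x / 2 ≤ (max ⌊x⌋₊ 1 : ℕ) := by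
  rw [Nat.cast_max, Nat.cast_one]
  rcases le_or_gt x 2 with hx | hx
  · exact le_max_of_le_right (by linarith)
  · exact le_max_of_le_left (by linarith [Nat.sub_one_lt_floor x])

section Bregman

variable {p : ℕ} {φ : EuclideanSpace ℝ (Fin p) → ℝ}

theorem dphi_nonneg (hconv : ConvexOn ℝ Set.univ φ) (hdiff : Differentiable ℝ φ)
    (x y : EuclideanSpace ℝ (Fin p)) : 0 ≤ dphi φ x y := by
  have := hconv.add_inner_le_of_hasGradientAt (hdiff y).hasGradientAt x
  rw [dphi]
  linarith

theorem dphi_le_inner_gradient_sub (hconv : ConvexOn ℝ Set.univ φ)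
    (hdiff : Differentiable ℝ φ) (θ θ' : EuclideanSpace ℝ (Fin p)) :
    dphi φ θ θ' ≤ inner ℝ (gradient φ θ - gradient φ θ') (θ - θ') := by
  have := hconv.add_inner_le_of_hasGradientAt (hdiff θ).hasGradientAt θ'
  rw [← neg_sub θ θ', inner_neg_right] at this
  rw [dphi, inner_sub_left]
  linarith

theorem dphi_sub_dphi (x θ θ' : EuclideanSpace ℝ (Fin p)) :
    dphi φ x θ - dphi φ x θ' =
      inner ℝ (gradient φ θ' - gradient φ θ) (x - θ) - dphi φ θ θ' := by
  simp only [dphi, inner_sub_left, inner_sub_right]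
  ring

theorem abs_dphi_sub_dphi_le {s : Set (EuclideanSpace ℝ (Fin p))} {H : ℝ}
    (hconv : ConvexOn ℝ Set.univ φ) (hdiff : Differentiable ℝ φ)
    (hlip : ∀ x ∈ s, ∀ y ∈ s, ‖gradient φ x - gradient φ y‖ ≤ H * ‖x - y‖)
    (x : EuclideanSpace ℝ (Fin p)) {θ θ' : EuclideanSpace ℝ (Fin p)} (hθ : θ ∈ s)
    (hθ' : θ' ∈ s) :
    |dphi φ x θ - dphi φ x θ'| ≤ H * ‖θ - θ'‖ * (‖θ - θ'‖ + ‖x - θ‖) := by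
  have hdiv_nonneg := dphi_nonneg hconv hdiff θ θ'
  have hdiv_le : dphi φ θ θ' ≤ H * ‖θ - θ'‖ * ‖θ - θ'‖ :=
    calc dphi φ θ θ' ≤ inner ℝ (gradient φ θ - gradient φ θ') (θ - θ') :=
          dphi_le_inner_gradient_sub hconv hdiff θ θ'
      _ ≤ ‖gradient φ θ - gradient φ θ'‖ * ‖θ - θ'‖ := real_inner_le_norm _ _
      _ ≤ H * ‖θ - θ'‖ * ‖θ - θ'‖ := by gcongr; exact hlip θ hθ θ' hθ'
  have hcross : |inner ℝ (gradient φ θ' - gradient φ θ) (x - θ)| ≤ H * ‖θ - θ'‖ * ‖x - θ‖ :=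
    calc _ ≤ ‖gradient φ θ' - gradient φ θ‖ * ‖x - θ‖ := abs_real_inner_le_norm _ _
      _ ≤ H * ‖θ - θ'‖ * ‖x - θ‖ := by
          gcongr; rw [norm_sub_rev θ θ']; exact hlip θ' hθ' θ hθ
  rw [abs_le] at hcross
  rw [dphi_sub_dphi, abs_le]
  constructor <;> linarith [hcross.1, hcross.2]

end Bregman

/-- The midpoints of the `N` equal subintervals of `[-M, M]`. -/
noncomputable def gridPoint (M : ℝ) (N n : ℕ) : ℝ := -M + (2 * n + 1) * M / N

theorem abs_gridPoint_le {M : ℝ} (hM : 0 ≤ M) {N n : ℕ} (hn : n < N) :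
    |gridPoint M N n| ≤ M := by
  have hN : (0 : ℝ) < N := by exact_mod_cast n.zero_le.trans_lt hn
  have hn' : (n : ℝ) + 1 ≤ N := by exact_mod_cast hn
  have h2M : (2 * n + 1) * M / N ≤ 2 * M := by
    rw [div_le_iff₀ hN]
    nlinarith
  rw [gridPoint, abs_le]
  constructor <;> nlinarith [div_nonneg (by positivity : 0 ≤ (2 * (n : ℝ) + 1) * M) hN.le]

theorem exists_abs_sub_gridPoint_le {M : ℝ} (hM : 0 < M) {N : ℕ} (hN : 0 < N) {t : ℝ}
    (ht : |t| ≤ M) : ∃ n : Fin N, |t - gridPoint M N n| ≤ M / N := by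
  have hN' : (0 : ℝ) < N := by exact_mod_cast hN
  rw [abs_le] at ht
  set s : ℝ := (t + M) * N / (2 * M) with hs
  have hs0 : 0 ≤ s := by
    rw [hs]
    exact div_nonneg (mul_nonneg (by linarith) hN'.le) (by linarith)
  have hsN : s ≤ N := by
    rw [hs, div_le_iff₀ (by linarith)]
    nlinarith
  set n : ℕ := min ⌊s⌋₊ (N - 1)
  have hn_le : (n : ℝ) ≤ s := (Nat.cast_le.mpr (min_le_left _ _)).trans (Nat.floor_le hs0)
  have hle_n : s ≤ n + 1 := by
    rcases le_total ⌊s⌋₊ (N - 1) with h | h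
    · rw [show n = ⌊s⌋₊ from min_eq_left h]
      exact (Nat.lt_floor_add_one s).le
    · rw [show n = N - 1 from min_eq_right h, Nat.cast_sub hN, Nat.cast_one]
      linarith
  refine ⟨⟨n, by omega⟩, ?_⟩
  have heq : t - gridPoint M N n = (2 * s - 2 * n - 1) * (M / N) := by
    rw [gridPoint, hs]
    field_simp
    ring
  rw [heq, abs_mul, abs_of_pos (by positivity : 0 < M / N)]
  exact mul_le_of_le_one_left (by positivity) (abs_le.mpr ⟨by linarith, by linarith⟩)

noncomputable def cubeGridPoint {p : ℕ} (M : ℝ) (N : ℕ) (c : Fin p → Fin N) :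
    EuclideanSpace ℝ (Fin p) :=
  WithLp.toLp 2 fun i => gridPoint M N (c i)

theorem cubeGridPoint_mem_cube {p : ℕ} {M : ℝ} (hM : 0 ≤ M) {N : ℕ} (c : Fin p → Fin N) :
    cubeGridPoint M N c ∈ cube p M :=
  fun i => abs_gridPoint_le hM (c i).isLt

theorem exists_cubeGridPoint_approx {p : ℕ} {M : ℝ} (hM : 0 < M) {N : ℕ} (hN : 0 < N)
    {x : EuclideanSpace ℝ (Fin p)} (hx : x ∈ cube p M) :
    ∃ c : Fin p → Fin N, ∀ i, |x i - cubeGridPoint M N c i| ≤ M / N :=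
  ⟨fun i => (exists_abs_sub_gridPoint_le hM hN (hx i)).choose,
    fun i => (exists_abs_sub_gridPoint_le hM hN (hx i)).choose_spec⟩

section Perturbation

variable {p : ℕ} {M : ℝ} {φ : EuclideanSpace ℝ (Fin p) → ℝ}

theorem norm_sub_le_of_mem_cube (hM : 0 ≤ M) {x y : EuclideanSpace ℝ (Fin p)}
    (hx : x ∈ cube p M) (hy : y ∈ cube p M) : ‖x - y‖ ≤ √p * (2 * M) := by
  refine (EuclideanSpace.norm_le_sqrt_card_mul (c := 2 * M) (by linarith) fun i => ?_).trans_eq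
    (by rw [Fintype.card_fin])
  rw [PiLp.sub_apply]
  exact (abs_sub _ _).trans (by linarith [hx i, hy i])

theorem abs_dphi_sub_dphi_le_of_mem_cube {H ε : ℝ} (hM : 0 ≤ M) (hH : 0 ≤ H)
    (hconv : ConvexOn ℝ Set.univ φ) (hdiff : Differentiable ℝ φ)
    (hlip : ∀ x ∈ cube p M, ∀ y ∈ cube p M, ‖gradient φ x - gradient φ y‖ ≤ H * ‖x - y‖)
    {x θ θ' : EuclideanSpace ℝ (Fin p)} (hx : x ∈ cube p M) (hθ : θ ∈ cube p M)
    (hθ' : θ' ∈ cube p M) (hε : 0 ≤ ε) (hεM : ε ≤ M) (hclose : ∀ i, |θ i - θ' i| ≤ ε) :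
    |dphi φ x θ - dphi φ x θ'| ≤ 3 * H * p * ε * M := by
  have hθθ' : ‖θ - θ'‖ ≤ √p * ε := by
    refine (EuclideanSpace.norm_le_sqrt_card_mul hε fun i => ?_).trans_eq (by rw [Fintype.card_fin])
    rw [PiLp.sub_apply]
    exact hclose i
  have hxθ := norm_sub_le_of_mem_cube hM hx hθ
  calc |dphi φ x θ - dphi φ x θ'| ≤ H * ‖θ - θ'‖ * (‖θ - θ'‖ + ‖x - θ‖) :=
        abs_dphi_sub_dphi_le hconv hdiff hlip x hθ hθ'
    _ ≤ H * (√p * ε) * (√p * ε + √p * (2 * M)) := by gcongr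
    _ = H * (√p * √p) * ε * (ε + 2 * M) := by ring
    _ ≤ 3 * H * p * ε * M := by
        rw [Real.mul_self_sqrt (Nat.cast_nonneg p)]
        have : 0 ≤ H * p * ε := by positivity
        nlinarith

theorem abs_fTheta_sub_fTheta_le {k : ℕ} {H ε τ : ℝ} (hM : 0 ≤ M) (hH : 0 ≤ H)
    (hconv : ConvexOn ℝ Set.univ φ) (hdiff : Differentiable ℝ φ)
    (hlip : ∀ x ∈ cube p M, ∀ y ∈ cube p M, ‖gradient φ x - gradient φ y‖ ≤ H * ‖x - y‖)
    {Ψ : (Fin k → ℝ) → ℝ} (hτ : 0 ≤ τ)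
    (hΨlip : ∀ u v : Fin k → ℝ, (∀ j, 0 ≤ u j) → (∀ j, 0 ≤ v j) →
      |Ψ u - Ψ v| ≤ τ * ∑ j, |u j - v j|)
    {Θ Θ' : Fin k → EuclideanSpace ℝ (Fin p)} (hΘ : ∀ j, Θ j ∈ cube p M)
    (hΘ' : ∀ j, Θ' j ∈ cube p M) (hε : 0 ≤ ε) (hεM : ε ≤ M)
    (hclose : ∀ j i, |Θ j i - Θ' j i| ≤ ε) {x : EuclideanSpace ℝ (Fin p)}
    (hx : x ∈ cube p M) :
    |fTheta φ Ψ Θ x - fTheta φ Ψ Θ' x| ≤ τ * (k * (3 * H * p * ε * M)) :=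
  calc |fTheta φ Ψ Θ x - fTheta φ Ψ Θ' x|
      ≤ τ * ∑ j, |dphi φ x (Θ j) - dphi φ x (Θ' j)| :=
        hΨlip _ _ (fun j => dphi_nonneg hconv hdiff _ _) (fun j => dphi_nonneg hconv hdiff _ _)
    _ ≤ τ * ∑ _j : Fin k, 3 * H * p * ε * M := by
        gcongr with j
        exact abs_dphi_sub_dphi_le_of_mem_cube hM hH hconv hdiff hlip hx (hΘ j) (hΘ' j) hε hεM
          (hclose j)
    _ = τ * (k * (3 * H * p * ε * M)) := by simp

end Perturbation

theorem covering_number_bound_general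
    {p k : ℕ} {M : ℝ} (hM : 0 < M)
    (φ : EuclideanSpace ℝ (Fin p) → ℝ)
    (hφconv : ConvexOn ℝ Set.univ φ) (hφdiff : Differentiable ℝ φ)
    {H : ℝ} (hH : 0 ≤ H)
    (hgradlip : ∀ x ∈ cube p M, ∀ y ∈ cube p M,
      ‖gradient φ x - gradient φ y‖ ≤ H * ‖x - y‖)
    (Ψ : (Fin k → ℝ) → ℝ)
    {τ : ℝ} (hτ : 0 < τ)
    (hΨlip : ∀ u v : Fin k → ℝ, (∀ j, 0 ≤ u j) → (∀ j, 0 ≤ v j) →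
      |Ψ u - Ψ v| ≤ τ * ∑ j, |u j - v j|)
    :
    ∀ δ : ℝ, 0 < δ →
      ∃ S : Finset (Fin k → EuclideanSpace ℝ (Fin p)),
        S.card ≤ (max (Nat.floor (8 * M ^ 2 * τ * H * k * p / δ)) 1) ^ (k * p) ∧
        (∀ Θ' ∈ S, ∀ j, Θ' j ∈ cube p M) ∧
        (∀ Θ : Fin k → EuclideanSpace ℝ (Fin p), (∀ j, Θ j ∈ cube p M) →
          ∃ Θ' ∈ S, ∀ x ∈ cube p M, |fTheta φ Ψ Θ x - fTheta φ Ψ Θ' x| ≤ δ) := by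
  intro δ hδ
  set N := max ⌊8 * M ^ 2 * τ * H * k * p / δ⌋₊ 1
  have hN : 0 < N := lt_max_of_lt_right one_pos
  have hN' : (0 : ℝ) < N := by exact_mod_cast hN
  have hNδ : 4 * (M ^ 2 * τ * H * k * p) ≤ N * δ := by
    have := half_le_max_floor_one (8 * M ^ 2 * τ * H * k * p / δ)
    rw [div_div, div_le_iff₀ (by positivity)] at this
    linarith
  refine ⟨Finset.univ.image fun (c : Fin k → Fin p → Fin N) j => cubeGridPoint M N (c j),
    ?_, ?_, fun Θ hΘ => ?_⟩
  · refine Finset.card_image_le.trans_eq ?_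
    simp [← pow_mul, mul_comm]
  · simp only [Finset.mem_image, Finset.mem_univ, true_and, forall_exists_index]
    rintro _ c rfl j
    exact cubeGridPoint_mem_cube hM.le (c j)
  choose c hc using fun j => exists_cubeGridPoint_approx hM hN (hΘ j)
  refine ⟨_, Finset.mem_image_of_mem _ (Finset.mem_univ c), fun x hx => ?_⟩
  calc |fTheta φ Ψ Θ x - fTheta φ Ψ (fun j => cubeGridPoint M N (c j)) x|
      ≤ τ * (k * (3 * H * p * (M / N) * M)) :=
        abs_fTheta_sub_fTheta_le hM.le hH hφconv hφdiff hgradlip hτ.le hΨlip hΘ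
          (fun j => cubeGridPoint_mem_cube hM.le (c j)) (by positivity)
          (div_le_self hM.le (by exact_mod_cast hN)) hc hx
    _ = 3 * (M ^ 2 * τ * H * k * p) / N := by field_simp
    _ ≤ δ := by
        rw [div_le_iff₀ hN']
        linarith [show 0 ≤ M ^ 2 * τ * H * k * p by positivity]

/-- Covering number bound for the class `F = {f_Θ : Θ ∈ ([-M,M]^p)^k}` in the
supremum norm on the cube: for every `δ > 0` there is a `δ`-cover of cardinality
at most `(max{⌊8 M² τ H k p / δ⌋, 1})^(k p)`. -/
theorem covering_number_bound
    {p k : ℕ} (hp : 0 < p) (hk : 0 < k) {M : ℝ} (hM : 0 < M)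
    (φ : EuclideanSpace ℝ (Fin p) → ℝ)
    (hφconv : ConvexOn ℝ Set.univ φ) (hφdiff : Differentiable ℝ φ)
    (hφzero : φ 0 = 0) (hgradzero : gradient φ 0 = 0)
    {H : ℝ} (hH : 0 ≤ H)
    (hgradlip : ∀ x ∈ cube p M, ∀ y ∈ cube p M,
      ‖gradient φ x - gradient φ y‖ ≤ H * ‖x - y‖)
    (Ψ : (Fin k → ℝ) → ℝ)
    (hΨnonneg : ∀ u : Fin k → ℝ, (∀ j, 0 ≤ u j) → 0 ≤ Ψ u)
    (hΨmono : ∀ u v : Fin k → ℝ, (∀ j, 0 ≤ u j) → (∀ j, u j ≤ v j) → Ψ u ≤ Ψ v)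
    (hΨzero : Ψ 0 = 0)
    {τ : ℝ} (hτ : 0 < τ)
    (hΨlip : ∀ u v : Fin k → ℝ, (∀ j, 0 ≤ u j) → (∀ j, 0 ≤ v j) →
      |Ψ u - Ψ v| ≤ τ * ∑ j, |u j - v j|)
    :
    ∀ δ : ℝ, 0 < δ →
      ∃ S : Finset (Fin k → EuclideanSpace ℝ (Fin p)),
        S.card ≤ (max (Nat.floor (8 * M ^ 2 * τ * H * k * p / δ)) 1) ^ (k * p) ∧
        (∀ Θ' ∈ S, ∀ j, Θ' j ∈ cube p M) ∧
        (∀ Θ : Fin k → EuclideanSpace ℝ (Fin p), (∀ j, Θ j ∈ cube p M) →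
          ∃ Θ' ∈ S, ∀ x ∈ cube p M, |fTheta φ Ψ Θ x - fTheta φ Ψ Θ' x| ≤ δ) :=
  covering_number_bound_general hM φ hφconv hφdiff hH hgradlip Ψ hτ hΨlip
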